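/- arXiv:0905.1282 — 11 statements merged into one kernel-verified Lean document; each statement's English description precedes it below -/
import Mathlib

section
/- If H is a retract of a group G (i.e., there is an endomorphism ρ of G with ρ(G) = H and ρ(h) = h for all h ∈ H) and G is conjugacy separable, then H is conjugacy separable. -/
/-- A group is conjugacy separable if any two non-conjugate elements have
non-conjugate images in some finite quotient. -/
def ConjSeparable (G : Type*) [Group G] : Prop :=
  ∀ x y : G, ¬ IsConj x y →
    ∃ (Q : Type) (_ : Group Q) (_ : Finite Q) (φ : G →* Q), ¬ IsConj (φ x) (φ y)

/-- If `H` is a retract of a conjugacy separable group `G`, then `H` is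
conjugacy separable. -/
theorem retract_conjSeparable {G : Type*} [Group G] (H : Subgroup G) (ρ : G →* G)
    (hrange : Set.range ρ = (H : Set G)) (hid : ∀ h ∈ H, ρ h = h)
    (hG : ConjSeparable G) : ConjSeparable H := by
  intro x y hxy
  have hG' : ¬ IsConj (x : G) (y : G) := by
    rintro ⟨g, hg⟩
    apply hxy
    have hmem : ρ g ∈ H := by
      rw [← SetLike.mem_coe, ← hrange]; exact ⟨g, rfl⟩
    refine ⟨⟨⟨ρ g, hmem⟩, ?_, ?_, ?_⟩, ?_⟩
    · exact ⟨(ρ g)⁻¹, H.inv_mem hmem⟩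
    · ext; exact mul_inv_cancel (ρ g)
    · ext; exact inv_mul_cancel (ρ g)
    · have := congrArg ρ hg.eq
      simp only [map_mul] at this
      rw [hid _ x.2, hid _ y.2] at this
      ext
      exact this
  obtain ⟨Q, _, _, φ, hφ⟩ := hG (x : G) (y : G) hG'
  exact ⟨Q, ‹_›, ‹_›, φ.comp H.subtype, hφ⟩
end

section
/- Let ρ_H and ρ_F be commuting retractions of a group G onto subgroups H and F, and let M be a normal subgroup of G with ρ_H(M) ⊆ M and ρ_F(M) ⊆ M. Then, denoting by φ: G → G/M the quotient map, one has φ(H ∩ F) = φ(H) ∩ φ(F). -/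
/-- Commuting retractions preserving a normal subgroup `M` give
`φ(H ∩ F) = φ(H) ∩ φ(F)` in `G ⧸ M`. -/
theorem image_inf_of_commuting_retractions {G : Type*} [Group G] (H F : Subgroup G)
    (ρH ρF : G →* G)
    (hHrange : Set.range ρH = (H : Set G)) (hHid : ∀ h ∈ H, ρH h = h)
    (hFrange : Set.range ρF = (F : Set G)) (hFid : ∀ f ∈ F, ρF f = f)
    (hcomm : ∀ g : G, ρH (ρF g) = ρF (ρH g))
    (M : Subgroup G) [M.Normal]
    (hMH : ρH '' (M : Set G) ⊆ (M : Set G)) (hMF : ρF '' (M : Set G) ⊆ (M : Set G)) :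
    (H ⊓ F).map (QuotientGroup.mk' M) =
      H.map (QuotientGroup.mk' M) ⊓ F.map (QuotientGroup.mk' M) := by
  apply le_antisymm
  · exact le_inf (Subgroup.map_mono inf_le_left) (Subgroup.map_mono inf_le_right)
  · rintro q ⟨⟨h, hh, rfl⟩, ⟨f, hf, hfq⟩⟩
    -- φ(f) = φ(h), so f⁻¹ * h ∈ M
    have hm : f⁻¹ * h ∈ M := by
      have := (QuotientGroup.mk'_eq_mk' M).mp hfq
      obtain ⟨z, hz, hzz⟩ := this
      simpa [← hzz, mul_assoc] using hz
    set m := f⁻¹ * h with hmdef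
    have hhm : h = f * m := by simp [hmdef]
    set x := ρF h with hx
    have hxF : x ∈ F := by rw [← SetLike.mem_coe, ← hFrange]; exact ⟨h, rfl⟩
    have hxH : x ∈ H := by
      have : x = ρH (ρF h) := by
        rw [hcomm, hHid h hh]
      rw [this, ← SetLike.mem_coe, ← hHrange]; exact ⟨ρF h, rfl⟩
    have hxm : x = f * ρF m := by
      rw [hx, hhm, map_mul, hFid f hf]
    have hMm : ρF m ∈ M := hMF ⟨m, hm, rfl⟩
    refine ⟨x, ⟨hxH, hxF⟩, ?_⟩
    rw [← hfq]
    apply (QuotientGroup.mk'_eq_mk' M).mpr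
    exact ⟨(ρF m)⁻¹, M.inv_mem hMm, by rw [hxm]; group⟩
end

section
/- Let A and B be retracts of a group G with commuting retractions ρ_A, ρ_B, and let x, y ∈ G. Set α := ρ_A(ρ_B(x)x⁻¹) · x · ρ_B(x⁻¹) and β := ρ_A(ρ_B(y)y⁻¹) · y · ρ_B(y⁻¹). Then y ∈ AxB if and only if β is conjugate to α by an element of A ∩ B. -/
/-- For commuting retractions `ρA`, `ρB` of `G` onto `A`, `B`, and
`α := ρA(ρB(x)x⁻¹)·x·ρB(x⁻¹)`, `β := ρA(ρB(y)y⁻¹)·y·ρB(y⁻¹)`, one has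
`y ∈ AxB` iff `β` is conjugate to `α` by an element of `A ∩ B`. -/
theorem mem_doubleCoset_iff_conj {G : Type*} [Group G] (A B : Subgroup G)
    (ρA ρB : G →* G)
    (hArange : Set.range ρA = (A : Set G)) (hAid : ∀ a ∈ A, ρA a = a)
    (hBrange : Set.range ρB = (B : Set G)) (hBid : ∀ b ∈ B, ρB b = b)
    (hcomm : ∀ g : G, ρA (ρB g) = ρB (ρA g)) (x y : G) :
    (∃ a ∈ A, ∃ b ∈ B, y = a * x * b) ↔
      ∃ c ∈ A ⊓ B,
        ρA (ρB y * y⁻¹) * y * ρB y⁻¹ =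
          c * (ρA (ρB x * x⁻¹) * x * ρB x⁻¹) * c⁻¹ := by
  have hAmem : ∀ g : G, ρA g ∈ A := fun g =>
    show ρA g ∈ (A : Set G) from hArange ▸ ⟨g, rfl⟩
  have hBmem : ∀ g : G, ρB g ∈ B := fun g =>
    show ρB g ∈ (B : Set G) from hBrange ▸ ⟨g, rfl⟩
  simp only [map_inv]
  constructor
  · rintro ⟨a, ha, b, hb, rfl⟩
    have hcA : ρA (ρB a) = ρB a := by rw [hcomm a, hAid a ha]
    refine ⟨ρB a, ⟨hcA ▸ hAmem (ρB a), hBmem a⟩, ?_⟩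
    have h1 : ρB (a * x * b) = ρB a * ρB x * b := by
      rw [map_mul, map_mul, hBid b hb]
    have h2 : ρA (ρB (a * x * b) * (a * x * b)⁻¹)
        = ρB a * ρA (ρB x * x⁻¹) * a⁻¹ := by
      rw [h1]
      have e : ρB a * ρB x * b * (a * x * b)⁻¹ = ρB a * (ρB x * x⁻¹) * a⁻¹ := by
        group
      rw [e, map_mul, map_mul, map_inv, hAid a ha, hcA]
    rw [h2, h1]
    group
  · rintro ⟨c, ⟨hcA, hcB⟩, hc⟩
    refine ⟨(ρA (ρB y * y⁻¹))⁻¹ * c * ρA (ρB x * x⁻¹), ?_,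
      (ρB x)⁻¹ * c⁻¹ * ρB y, ?_, ?_⟩
    · exact A.mul_mem (A.mul_mem (A.inv_mem (hAmem _)) hcA) (hAmem _)
    · exact B.mul_mem (B.mul_mem (B.inv_mem (hBmem x)) (B.inv_mem hcB)) (hBmem y)
    · calc y = (ρA (ρB y * y⁻¹))⁻¹ * (ρA (ρB y * y⁻¹) * y * (ρB y)⁻¹) * ρB y := by
            group
        _ = (ρA (ρB y * y⁻¹))⁻¹ * (c * (ρA (ρB x * x⁻¹) * x * (ρB x)⁻¹) * c⁻¹)
              * ρB y := by rw [hc]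
        _ = (ρA (ρB y * y⁻¹))⁻¹ * c * ρA (ρB x * x⁻¹) * x
              * ((ρB x)⁻¹ * c⁻¹ * ρB y) := by group
end

section
/- Let A and B be retracts of a group G with commuting retractions ρ_A, ρ_B, and let x ∈ G. Set α := ρ_A(ρ_B(x)x⁻¹) · x · ρ_B(x⁻¹) and γ := ρ_A(ρ_B(x)x⁻¹) ∈ A. Then A ∩ xBx⁻¹ = γ⁻¹ · C_{A∩B}(α) · γ, where C_{A∩B}(α) is the centralizer of α in A ∩ B. -/
/-- For commuting retractions `ρA`, `ρB` of `G` onto `A`, `B`, and any `x ∈ G`,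
setting `α := ρA(ρB(x)x⁻¹)·x·ρB(x⁻¹)` and `γ := ρA(ρB(x)x⁻¹)`, one has
`A ∩ xBx⁻¹ = γ⁻¹ · C_{A∩B}(α) · γ`. -/
theorem inter_conjugate_eq_conj_centralizer {G : Type*} [Group G] (A B : Subgroup G)
    (ρA ρB : G →* G)
    (hArange : Set.range ρA = (A : Set G)) (hAid : ∀ a ∈ A, ρA a = a)
    (hBrange : Set.range ρB = (B : Set G)) (hBid : ∀ b ∈ B, ρB b = b)
    (hcomm : ∀ g : G, ρA (ρB g) = ρB (ρA g)) (x : G) :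
    (A : Set G) ∩ ((fun b => x * b * x⁻¹) '' (B : Set G)) =
      (fun c => (ρA (ρB x * x⁻¹))⁻¹ * c * ρA (ρB x * x⁻¹)) ''
        {c : G | c ∈ A ⊓ B ∧
          c * (ρA (ρB x * x⁻¹) * x * ρB x⁻¹) = (ρA (ρB x * x⁻¹) * x * ρB x⁻¹) * c} := by
  have hAmem : ∀ g : G, ρA g ∈ A := fun g => by
    rw [← SetLike.mem_coe, ← hArange]; exact ⟨g, rfl⟩
  have hBmem : ∀ g : G, ρB g ∈ B := fun g => by
    rw [← SetLike.mem_coe, ← hBrange]; exact ⟨g, rfl⟩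
  set γ : G := ρA (ρB x * x⁻¹) with hγdef
  have hγA : γ ∈ A := hAmem _
  have hu : ρB x⁻¹ = (ρB x)⁻¹ := map_inv ρB x
  ext a
  constructor
  · rintro ⟨haA, b, hbB, hb⟩
    have haA' : a ∈ A := haA
    have hbB' : b ∈ B := hbB
    have hax : a * x = x * b := by rw [← hb]; group
    have key : ρB a = (ρB x * x⁻¹) * a * (ρB x * x⁻¹)⁻¹ := by
      rw [← hb, map_mul, map_mul, map_inv, hBid b hbB']; group
    have hc : γ * a * γ⁻¹ = ρB a := by
      have h1 : ρA (ρB a) = ρB a := by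
        rw [hcomm a, hAid a haA']
      calc γ * a * γ⁻¹
          = ρA ((ρB x * x⁻¹) * a * (ρB x * x⁻¹)⁻¹) := by
            rw [map_mul, map_mul, map_inv, hAid a haA']
        _ = ρA (ρB a) := by rw [← key]
        _ = ρB a := h1
    have hca : γ * a * γ⁻¹ = ρB x * b * (ρB x)⁻¹ := by
      rw [hc, ← hb, map_mul, map_mul, map_inv, hBid b hbB']
    refine ⟨γ * a * γ⁻¹, ⟨Subgroup.mem_inf.mpr ⟨mul_mem (mul_mem hγA haA') (inv_mem hγA), ?_⟩, ?_⟩, by group⟩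
    · rw [hc]; exact hBmem a
    · calc (γ * a * γ⁻¹) * (γ * x * ρB x⁻¹)
          = γ * (a * x) * (ρB x)⁻¹ := by rw [hu]; group
        _ = γ * (x * b) * (ρB x)⁻¹ := by rw [hax]
        _ = (γ * x * (ρB x)⁻¹) * (ρB x * b * (ρB x)⁻¹) := by group
        _ = (γ * x * ρB x⁻¹) * (γ * a * γ⁻¹) := by rw [hu, hca]
  · rintro ⟨c, ⟨hcAB, hcc⟩, rfl⟩
    obtain ⟨hcA, hcB⟩ := Subgroup.mem_inf.mp hcAB
    refine ⟨mul_mem (mul_mem (inv_mem hγA) hcA) hγA,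
      ρB x⁻¹ * c * (ρB x⁻¹)⁻¹, mul_mem (mul_mem (hBmem _) hcB) (inv_mem (hBmem _)), ?_⟩
    have h2 : γ⁻¹ * (c * (γ * x * ρB x⁻¹)) = γ⁻¹ * ((γ * x * ρB x⁻¹) * c) := by
      rw [hcc]
    calc x * (ρB x⁻¹ * c * (ρB x⁻¹)⁻¹) * x⁻¹
        = (γ⁻¹ * ((γ * x * ρB x⁻¹) * c)) * (ρB x⁻¹)⁻¹ * x⁻¹ := by group
      _ = (γ⁻¹ * (c * (γ * x * ρB x⁻¹))) * (ρB x⁻¹)⁻¹ * x⁻¹ := by rw [h2]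
      _ = γ⁻¹ * c * γ := by group
end

section
/- Let A and B be retracts of a residually finite group G such that the corresponding retractions commute. Then the double coset AB = {ab : a ∈ A, b ∈ B} is separable in G, i.e., closed in the profinite topology on G. -/
/-- A subset `S` of `G` is separable if it is closed in the profinite topology:
every `g ∉ S` is separated from `S` by a coset of a finite index normal subgroup. -/
def SeparableIn {G : Type*} [Group G] (S : Set G) : Prop :=
  ∀ g ∉ S, ∃ N : Subgroup G, N.Normal ∧ N.FiniteIndex ∧ ∀ s ∈ S, g⁻¹ * s ∉ N

/-- A group is residually finite if every nontrivial element survives in some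
finite quotient. -/
def ResiduallyFinite (G : Type*) [Group G] : Prop :=
  ∀ g : G, g ≠ 1 → ∃ N : Subgroup G, N.Normal ∧ N.FiniteIndex ∧ g ∉ N

/-- If `A` and `B` are retracts of a residually finite group `G` with commuting
retractions, then the double coset `AB` is separable in `G`. -/
theorem doubleCoset_separable_of_commuting_retractions {G : Type*} [Group G]
    (hRF : ResiduallyFinite G) (A B : Subgroup G) (ρA ρB : G →* G)
    (hArange : Set.range ρA = (A : Set G)) (hAid : ∀ a ∈ A, ρA a = a)
    (hBrange : Set.range ρB = (B : Set G)) (hBid : ∀ b ∈ B, ρB b = b)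
    (hcomm : ∀ g : G, ρA (ρB g) = ρB (ρA g)) :
    SeparableIn {x : G | ∃ a ∈ A, ∃ b ∈ B, x = a * b} := by
  intro g hg
  -- the characteristic "word"
  set w : G → G := fun x => (ρA x)⁻¹ * x * (ρB x)⁻¹ * (ρA (ρB x)) with hw
  have hmemA : ∀ x : G, ρA x ∈ A := by
    intro x; have : ρA x ∈ Set.range ρA := ⟨x, rfl⟩; rwa [hArange] at this
  have hmemB : ∀ x : G, ρB x ∈ B := by
    intro x; have : ρB x ∈ Set.range ρB := ⟨x, rfl⟩; rwa [hBrange] at this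
  -- on the double coset, w vanishes
  have hws : ∀ s ∈ {x : G | ∃ a ∈ A, ∃ b ∈ B, x = a * b}, w s = 1 := by
    rintro s ⟨a, ha, b, hb, rfl⟩
    have h1 : ρA (a * b) = a * ρA b := by rw [map_mul, hAid a ha]
    have h2 : ρB (a * b) = ρB a * b := by rw [map_mul, hBid b hb]
    have h3 : ρA (ρB a) = ρB a := by rw [hcomm, hAid a ha]
    simp only [hw, h1, h2, map_mul, h3, hBid b hb]
    group
  -- w g ≠ 1
  have hwg : w g ≠ 1 := by
    intro h
    apply hg
    refine ⟨ρA g * (ρA (ρB g))⁻¹, A.mul_mem (hmemA g) (A.inv_mem (hmemA _)), ρB g, hmemB g, ?_⟩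
    have key : g = ρA g * ((ρA g)⁻¹ * g * (ρB g)⁻¹ * ρA (ρB g)) * (ρA (ρB g))⁻¹ * ρB g := by
      group
    rw [show (ρA g)⁻¹ * g * (ρB g)⁻¹ * ρA (ρB g) = 1 from h] at key
    exact key.trans (by group)
  obtain ⟨N, hNn, hNf, hgN⟩ := hRF _ hwg
  haveI := hNn
  haveI := hNf
  letI π : G →* G ⧸ N := QuotientGroup.mk' N
  -- finite index normal subgroup invariant enough for our purposes
  refine ⟨(N ⊓ (π.comp ρA).ker) ⊓ ((π.comp ρB).ker ⊓ (π.comp (ρA.comp ρB)).ker), ?_, ?_, ?_⟩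
  · have h1 : (π.comp ρA).ker.Normal := (π.comp ρA).normal_ker
    have h2 : (π.comp ρB).ker.Normal := (π.comp ρB).normal_ker
    have h3 : (π.comp (ρA.comp ρB)).ker.Normal := (π.comp (ρA.comp ρB)).normal_ker
    exact Subgroup.normal_inf_normal _ _
  · haveI : (π.comp ρA).ker.FiniteIndex := Subgroup.finiteIndex_ker _
    haveI : (π.comp ρB).ker.FiniteIndex := Subgroup.finiteIndex_ker _
    haveI : (π.comp (ρA.comp ρB)).ker.FiniteIndex := Subgroup.finiteIndex_ker _
    infer_instance
  · rintro s hs hmem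
    have hs1 := hws s hs
    rw [Subgroup.mem_inf, Subgroup.mem_inf, Subgroup.mem_inf] at hmem
    obtain ⟨⟨hm0, hm1⟩, hm2, hm3⟩ := hmem
    rw [MonoidHom.mem_ker, MonoidHom.comp_apply, QuotientGroup.mk'_apply,
      QuotientGroup.eq_one_iff] at hm1 hm2 hm3
    rw [MonoidHom.comp_apply] at hm3
    rw [map_mul, map_inv] at hm1 hm2 hm3
    rw [map_mul, map_inv] at hm3
    have e0 : (g : G ⧸ N) = (s : G ⧸ N) := QuotientGroup.eq.mpr hm0
    have eA : ((ρA g : G) : G ⧸ N) = ((ρA s : G) : G ⧸ N) := QuotientGroup.eq.mpr hm1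
    have eB : ((ρB g : G) : G ⧸ N) = ((ρB s : G) : G ⧸ N) := QuotientGroup.eq.mpr hm2
    have eAB : ((ρA (ρB g) : G) : G ⧸ N) = ((ρA (ρB s) : G) : G ⧸ N) :=
      QuotientGroup.eq.mpr hm3
    apply hgN
    rw [← QuotientGroup.eq_one_iff]
    have : ((w g : G) : G ⧸ N) = ((w s : G) : G ⧸ N) := by
      simp only [hw, QuotientGroup.mk_mul, QuotientGroup.mk_inv, e0, eA, eB, eAB]
    rw [this, hs1, QuotientGroup.mk_one]
end

section
/- Let G be a residually finite group, let A be a retract of G, and let S ⊆ A be a subset closed in the profinite topology of A. Then S is closed in the profinite topology of G. -/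
/-- If `A` is a retract of a residually finite group `G` and `S ⊆ A` is closed in
the profinite topology of `A`, then `S` is closed in the profinite topology of `G`. -/
theorem separable_in_retract_separable {G : Type*} [Group G] (hRF : ResiduallyFinite G)
    (A : Subgroup G) (ρ : G →* G)
    (hrange : Set.range ρ = (A : Set G)) (hid : ∀ a ∈ A, ρ a = a)
    (S : Set G) (hSA : S ⊆ (A : Set G))
    (hS : SeparableIn {a : A | (a : G) ∈ S}) :
    SeparableIn S := by
  intro g hg
  have hmem : ∀ x : G, ρ x ∈ A := fun x => by
    exact show ρ x ∈ (A : Set G) from hrange ▸ Set.mem_range_self x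
  by_cases hfix : ρ g = g
  · -- g is fixed by ρ, hence g ∈ A; use separability in A
    have hgA : g ∈ A := by exact show g ∈ (A : Set G) from hrange ▸ ⟨g, hfix⟩
    set φ : G →* A := ρ.codRestrict A hmem with hφ
    have hφsurj : Function.Surjective φ := fun a =>
      ⟨(a : G), Subtype.ext (hid a a.2)⟩
    have hgS : (⟨g, hgA⟩ : A) ∉ {a : A | (a : G) ∈ S} := hg
    obtain ⟨N, hN, hNfi, hNs⟩ := hS _ hgS
    refine ⟨N.comap φ, hN.comap φ, ?_, ?_⟩
    · refine ⟨?_⟩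
      rw [Subgroup.index_comap_of_surjective _ hφsurj]
      exact hNfi.index_ne_zero
    · intro s hs hns
      have hsA := hSA hs
      have heq : φ (g⁻¹ * s) = (⟨g, hgA⟩ : A)⁻¹ * ⟨s, hsA⟩ := by
        ext
        simp [hφ, MonoidHom.codRestrict, hid g hgA, hid s hsA]
      apply hNs ⟨s, hsA⟩ hs
      rw [← heq]
      exact hns
  · -- ρ g ≠ g : separate g⁻¹ * ρ g from 1
    have hne : g⁻¹ * ρ g ≠ 1 := fun h => hfix (inv_mul_eq_one.mp h).symm
    obtain ⟨N, hN, hNfi, hNg⟩ := hRF _ hne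
    refine ⟨N ⊓ N.comap ρ, ?_, ?_, ?_⟩
    · exact ⟨fun n hn x => ⟨hN.conj_mem n hn.1 x,
        by simpa using (hN.comap ρ).conj_mem n hn.2 x⟩⟩
    · have h1 : (N.comap ρ).FiniteIndex := by
        refine ⟨?_⟩
        rw [Subgroup.index_comap]
        exact fun h => hNfi.index_ne_zero
          (Nat.eq_zero_of_zero_dvd (h ▸ (@Subgroup.relIndex_dvd_index_of_normal _ _ N ρ.range hN)))
      have := hNfi
      infer_instance
    · rintro s hs ⟨h1, h2⟩
      have hsA := hSA hs
      have hρ : ρ (g⁻¹ * s) = (ρ g)⁻¹ * s := by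
        rw [map_mul, map_inv, hid s hsA]
      have h2' : (ρ g)⁻¹ * s ∈ N := by rw [← hρ]; exact h2
      -- (g⁻¹ * s) * ((ρ g)⁻¹ * s)⁻¹ = g⁻¹ * ρ g
      have : g⁻¹ * ρ g ∈ N := by
        have := N.mul_mem h1 (N.inv_mem h2')
        simpa [mul_assoc] using this
      exact hNg this
end

section
/- Let G be a group with the Unique Root property that contains a conjugacy separable subgroup H of finite index. Then G is conjugacy separable. -/
section

variable {G : Type*} [Group G]

theorem isConj_of_isConj_pow (hUR : ∀ (x y : G) (n : ℕ), 0 < n → x ^ n = y ^ n → x = y)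
    {x y : G} {n : ℕ} (hn : 0 < n) (h : IsConj (x ^ n) (y ^ n)) : IsConj x y := by
  obtain ⟨c, hc⟩ := isConj_iff.1 h
  exact isConj_iff.2 ⟨c, hUR _ _ n hn (by rw [conj_pow, hc])⟩

theorem QuotientGroup.isConj_mk_iff {M : Subgroup G} [M.Normal] {x y : G} :
    IsConj (x : G ⧸ M) (y : G ⧸ M) ↔ ∃ g : G, (g * x * g⁻¹)⁻¹ * y ∈ M := by
  simp only [isConj_iff, QuotientGroup.mk_surjective.exists, ← QuotientGroup.mk_inv,
    ← QuotientGroup.mk_mul, QuotientGroup.eq]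

instance Subgroup.finiteIndex_map_subtype {H : Subgroup G} [H.FiniteIndex] (K : Subgroup H)
    [K.FiniteIndex] : (K.map H.subtype).FiniteIndex :=
  ⟨by rw [Subgroup.index_map_subtype]
      exact mul_ne_zero FiniteIndex.index_ne_zero FiniteIndex.index_ne_zero⟩

theorem conjSeparable_iff : ConjSeparable G ↔
    ∀ x y : G, ¬IsConj x y → ∃ M : FiniteIndexNormalSubgroup G,
      ¬IsConj (x : G ⧸ M.toSubgroup) (y : G ⧸ M.toSubgroup) := by
  refine forall₂_congr fun x y => imp_congr_right fun _ => ⟨?_, ?_⟩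
  · rintro ⟨Q, _, _, φ, hφ⟩
    exact ⟨.ofSubgroup φ.ker, fun h => hφ (by simpa using (QuotientGroup.kerLift φ).map_isConj h)⟩
  · rintro ⟨M, hM⟩
    let e : Shrink.{0} (G ⧸ M.toSubgroup) ≃* G ⧸ M.toSubgroup := Shrink.mulEquiv
    refine ⟨_, inferInstance, .of_equiv _ e.symm.toEquiv,
      e.symm.toMonoidHom.comp (QuotientGroup.mk' _), fun h => hM ?_⟩
    simpa using e.toMonoidHom.map_isConj h

theorem ConjSeparable.exists_not_isConj_of_mem_normalCore {H : Subgroup G} [H.FiniteIndex]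
    (hH : ConjSeparable H) {u v : G} (hu : u ∈ H.normalCore) (hv : v ∈ H) (huv : ¬IsConj u v) :
    ∃ M : FiniteIndexNormalSubgroup G, ¬IsConj (u : G ⧸ M.toSubgroup) (v : G ⧸ M.toSubgroup) := by
  have hconj (t : G) : t⁻¹ * u * t ∈ H := by simpa using hu t⁻¹
  have hsep (t : G) : ¬IsConj (⟨t⁻¹ * u * t, hconj t⟩ : H) ⟨v, hv⟩ := fun h =>
    huv ((isConj_iff.2 ⟨t⁻¹, by simp⟩).trans (H.subtype.map_isConj h))
  choose K hK using fun q : G ⧸ H => conjSeparable_iff.1 hH _ _ (hsep q.out)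
  let M := (⨅ q, (K q).toSubgroup.map H.subtype).normalCore
  have : M.FiniteIndex := by
    have := Subgroup.finiteIndex_iInf fun q => Subgroup.finiteIndex_map_subtype (K q).toSubgroup
    infer_instance
  refine ⟨.ofSubgroup M, fun h => ?_⟩
  obtain ⟨g, hg⟩ := QuotientGroup.isConj_mk_iff.1 h
  set q : G ⧸ H := QuotientGroup.mk g⁻¹
  have hgt : (q.out)⁻¹ * g⁻¹ ∈ H := QuotientGroup.eq.1 q.out_eq'
  obtain ⟨m, hm, hmg⟩ := ((Subgroup.normalCore_le _).trans (iInf_le _ q)) hg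
  refine hK q (QuotientGroup.isConj_mk_iff.2 ⟨⟨(q.out)⁻¹ * g⁻¹, hgt⟩⁻¹, ?_⟩)
  rw [SetLike.mem_coe] at hm
  convert hm using 1
  ext
  simp only [Subgroup.subtype_apply] at hmg ⊢
  rw [hmg]
  push_cast
  group

end

/-- If a group `G` has the Unique Root property and contains a conjugacy
separable subgroup `H` of finite index, then `G` is conjugacy separable. -/
theorem conjSeparable_of_finiteIndex_uniqueRoots {G : Type*} [Group G]
    (hUR : ∀ (x y : G) (n : ℕ), 0 < n → x ^ n = y ^ n → x = y)
    (H : Subgroup G) [H.FiniteIndex] (hH : ConjSeparable H) :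
    ConjSeparable G := by
  refine conjSeparable_iff.2 fun x y hxy => ?_
  set n := H.normalCore.index
  have hn : 0 < n := Nat.pos_of_ne_zero Subgroup.FiniteIndex.index_ne_zero
  obtain ⟨M, hM⟩ := hH.exists_not_isConj_of_mem_normalCore (H.normalCore.pow_index_mem x)
    (H.normalCore_le (H.normalCore.pow_index_mem y)) fun h => hxy (isConj_of_isConj_pow hUR hn h)
  exact ⟨M, fun h => hM (by simpa using h.pow n)⟩
end

section
/- Let G be a group, H ≤ G a subgroup, g ∈ G, and K a finite index normal subgroup of G. If the set g^{H∩K} = {xgx⁻¹ : x ∈ H ∩ K} is separable in G, then there exists a finite index normal subgroup L ⊴ G with L ≤ K such that, for the quotient map ψ: G → G/L, the centralizer of ψ(g) in ψ(H) is contained in ψ(C_H(g)·K). -/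
/-- If the conjugacy class `g^{H ∩ K}` is separable in `G`, where `K` is a finite
index normal subgroup, then there is a finite index normal subgroup `L ≤ K` such
that the centralizer of the image of `g` in the image of `H` in `G ⧸ L` is
contained in the image of `C_H(g) · K`. -/
theorem centralizer_condition_of_separable_conjClass {G : Type*} [Group G]
    (H : Subgroup G) (g : G) (K : Subgroup G) [K.Normal] [K.FiniteIndex]
    (hsep : SeparableIn {y : G | ∃ x ∈ H ⊓ K, y = x * g * x⁻¹}) :
    ∃ (L : Subgroup G) (_ : L.Normal), L.FiniteIndex ∧ L ≤ K ∧
      ∀ q ∈ H.map (QuotientGroup.mk' L),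
        q * QuotientGroup.mk' L g = QuotientGroup.mk' L g * q →
        ∃ c ∈ H, c * g = g * c ∧ ∃ k ∈ K, q = QuotientGroup.mk' L (c * k) := by
  classical
  set S : Set G := {y : G | ∃ x ∈ H ⊓ K, y = x * g * x⁻¹} with hSdef
  -- `Bad h` : `h ∈ H` but `h ∉ C_H(g) K`
  let Bad : G → Prop := fun h => h ∈ H ∧ ¬∃ c ∈ H, c * g = g * c ∧ ∃ k ∈ K, h = c * k
  -- a bad element conjugates `g` outside of `S`
  have key : ∀ h, Bad h → h⁻¹ * g * h ∉ S := by
    rintro h ⟨hH, hnc⟩ ⟨x, hx, he⟩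
    apply hnc
    refine ⟨h * x, mul_mem hH (Subgroup.mem_inf.mp hx).1, ?_, x⁻¹,
      inv_mem (Subgroup.mem_inf.mp hx).2, by group⟩
    calc h * x * g = h * (x * g * x⁻¹) * x := by group
      _ = h * (h⁻¹ * g * h) * x := by rw [← he]
      _ = g * (h * x) := by group
  -- a single separating subgroup for each coset of `K`
  have sep' : ∀ q : G ⧸ K, ∃ N : Subgroup G, N.Normal ∧ N.FiniteIndex ∧
      ∀ h, Bad h → (QuotientGroup.mk h : G ⧸ K) = q →
        ∀ s ∈ S, (h⁻¹ * g * h)⁻¹ * s ∉ N := by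
    intro q
    by_cases hq : ∃ h0, Bad h0 ∧ (QuotientGroup.mk h0 : G ⧸ K) = q
    · obtain ⟨h0, hb0, hq0⟩ := hq
      obtain ⟨N, hNn, hNf, hNs⟩ := hsep _ (key h0 hb0)
      refine ⟨N, hNn, hNf, ?_⟩
      intro h hb hqh s hs hmem
      have hu : h0⁻¹ * h ∈ K := by
        have : (QuotientGroup.mk h0 : G ⧸ K) = QuotientGroup.mk h := by rw [hq0, hqh]
        exact QuotientGroup.eq.mp this
      set u : G := h0⁻¹ * h with hu_def
      have huH : u ∈ H := mul_mem (inv_mem hb0.1) hb.1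
      have husu : u * s * u⁻¹ ∈ S := by
        obtain ⟨x, hx, rfl⟩ := hs
        exact ⟨u * x, mul_mem (Subgroup.mem_inf.mpr ⟨huH, hu⟩) hx, by group⟩
      apply hNs _ husu
      have : u * ((h⁻¹ * g * h)⁻¹ * s) * u⁻¹ ∈ N := hNn.conj_mem _ hmem u
      have heq : u * ((h⁻¹ * g * h)⁻¹ * s) * u⁻¹ = (h0⁻¹ * g * h0)⁻¹ * (u * s * u⁻¹) := by
        rw [hu_def]; group
      rwa [heq] at this
    · exact ⟨⊤, inferInstance, inferInstance,
        fun h hb hqh => absurd ⟨h, hb, hqh⟩ hq⟩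
  choose N hNn hNf hNs using sep'
  set L : Subgroup G := K ⊓ ⨅ q : G ⧸ K, N q with hLdef
  have hLK : L ≤ K := inf_le_left
  have hLN : ∀ q : G ⧸ K, L ≤ N q := fun q => le_trans inf_le_right (iInf_le N q)
  have hLnormal : L.Normal := by
    constructor
    intro n hn x
    rw [hLdef, Subgroup.mem_inf, Subgroup.mem_iInf] at hn ⊢
    exact ⟨‹K.Normal›.conj_mem _ hn.1 x, fun q => (hNn q).conj_mem _ (hn.2 q) x⟩
  have hLfin : L.FiniteIndex := by
    haveI : (⨅ q : G ⧸ K, N q).FiniteIndex := Subgroup.finiteIndex_iInf hNf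
    rw [hLdef]; infer_instance
  refine ⟨L, hLnormal, hLfin, hLK, ?_⟩
  rintro q hq hcomm
  rw [Subgroup.mem_map] at hq
  obtain ⟨h, hH, rfl⟩ := hq
  by_cases hb : ∃ c ∈ H, c * g = g * c ∧ ∃ k ∈ K, h = c * k
  · obtain ⟨c, hc, hcg, k, hk, rfl⟩ := hb
    exact ⟨c, hc, hcg, k, hk, rfl⟩
  · exfalso
    have hBad : Bad h := ⟨hH, hb⟩
    -- the commutation hypothesis gives `(h*g)⁻¹ * (g*h) ∈ L`
    have h1 : QuotientGroup.mk' L (h * g) = QuotientGroup.mk' L (g * h) := by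
      rw [map_mul, map_mul, hcomm]
    rw [QuotientGroup.mk'_apply, QuotientGroup.mk'_apply] at h1
    have hw : (h * g)⁻¹ * (g * h) ∈ L := QuotientGroup.eq.mp h1
    have hwN : (h * g)⁻¹ * (g * h) ∈ N (QuotientGroup.mk h) :=
      hLN (QuotientGroup.mk h) hw
    -- hence `(h⁻¹ g h)⁻¹ * g ∈ N`, contradicting the separation, as `g ∈ S`
    have hgS : g ∈ S := ⟨1, one_mem _, by group⟩
    apply hNs (QuotientGroup.mk h) h hBad rfl g hgS
    have hinv : ((h * g)⁻¹ * (g * h))⁻¹ ∈ N (QuotientGroup.mk h) := inv_mem hwN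
    have heq : ((h * g)⁻¹ * (g * h))⁻¹ = (h⁻¹ * g * h)⁻¹ * g := by group
    rwa [heq] at hinv
end

section
/- Let G be a group and H ≤ G. Suppose: (1) the conjugacy class g^G is separable in G; (2) for every finite index normal subgroup K ⊴ G there is a finite index normal subgroup L ≤ K such that the centralizer of the image of g in G/L is contained in the image of C_G(g)·K; and (3) the double coset C_G(g)·H is separable in G. Then the set g^H = {hgh⁻¹ : h ∈ H} is separable in G. -/
/-!
Let `z ∉ g^H`. If `z ∉ g^G`, a finite quotient separating `z` from `g^G` also separates it from
`g^H`. Otherwise `z = x g x⁻¹`, and `x⁻¹ ∉ C_G(g) H`, so some `G/K` separates `x⁻¹` from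
`C_G(g) H`; let `L ≤ K` be given by the Centralizer Condition. If `z ≡ h g h⁻¹` modulo `L` with
`h ∈ H`, then `h⁻¹ x` centralizes `g` modulo `L`, hence `h⁻¹ x ∈ C_G(g) K`, and then
`x⁻¹ ∈ C_G(g) H` modulo `K`, a contradiction.
-/

open QuotientGroup

section

variable {G : Type*} [Group G]

theorem SeparableIn.exists_separating_of_subset {S T : Set G} (hT : SeparableIn T) (hST : S ⊆ T)
    {z : G} (hz : z ∉ T) :
    ∃ N : Subgroup G, N.Normal ∧ N.FiniteIndex ∧ ∀ s ∈ S, z⁻¹ * s ∉ N :=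
  (hT z hz).imp fun _ ⟨hN, hNf, hsep⟩ => ⟨hN, hNf, fun s hs => hsep s (hST hs)⟩

theorem conj_eq_conj_iff_commute {a b g : G} :
    a * g * a⁻¹ = b * g * b⁻¹ ↔ Commute (b⁻¹ * a) g := by
  rw [commute_iff_eq, mul_inv_eq_iff_eq_mul, mul_assoc, mul_assoc, ← inv_mul_eq_iff_eq_mul,
    ← mul_assoc, ← mul_assoc]

theorem conj_mul_eq_conj_of_commute {c g : G} (hc : Commute c g) (a : G) :
    a * c * g * (a * c)⁻¹ = a * g * a⁻¹ :=
  conj_eq_conj_iff_commute.mpr (by simpa using hc)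

theorem commute_mk_of_inv_mul_conj_mem {N : Subgroup G} [N.Normal] {a b g : G}
    (h : (a * g * a⁻¹)⁻¹ * (b * g * b⁻¹) ∈ N) :
    Commute (mk' N (b⁻¹ * a)) (mk' N g) := by
  have hconj : (a * g * a⁻¹ : G ⧸ N) = b * g * b⁻¹ := by
    simpa only [mk_mul, mk_inv] using QuotientGroup.eq.mpr h
  simpa only [mk'_apply, mk_mul, mk_inv] using (conj_eq_conj_iff_commute.mp hconj)

theorem exists_commute_mul_inv_mem_of_inv_mul_conj_mem {K L : Subgroup G} [K.Normal] [L.Normal]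
    (hLK : L ≤ K) {g : G}
    (hL : ∀ x : G, mk' L x * mk' L g = mk' L g * mk' L x →
      ∃ c : G, c * g = g * c ∧ ∃ k ∈ K, mk' L x = mk' L (c * k))
    {x h : G} (hmem : (x * g * x⁻¹)⁻¹ * (h * g * h⁻¹) ∈ L) :
    ∃ c : G, Commute c g ∧ x * (c * h⁻¹) ∈ K := by
  obtain ⟨c, hc, k, hk, hx⟩ := hL (h⁻¹ * x) (commute_mk_of_inv_mul_conj_mem hmem)
  have hxck : (h⁻¹ * x)⁻¹ * (c * k) ∈ K := hLK (QuotientGroup.eq.mp hx)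
  have hxc : (h⁻¹ * x)⁻¹ * c ∈ K := by
    simpa [mul_assoc] using K.mul_mem hxck (K.inv_mem hk)
  refine ⟨c⁻¹, Commute.inv_left hc, ‹K.Normal›.mem_comm ?_⟩
  simpa [mul_assoc] using K.inv_mem hxc

end

/-- If the conjugacy class `g^G` is separable, the pair `(G, g)` satisfies the
Centralizer Condition, and the double coset `C_G(g)·H` is separable, then the
`H`-conjugacy class `g^H` is separable in `G`. -/
theorem conjClass_separable_of_CC {G : Type*} [Group G] (H : Subgroup G) (g : G)
    (hclass : SeparableIn {y : G | ∃ x : G, y = x * g * x⁻¹})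
    (hCC : ∀ (K : Subgroup G), K.Normal → K.FiniteIndex →
      ∃ (L : Subgroup G) (_ : L.Normal), L.FiniteIndex ∧ L ≤ K ∧
        ∀ x : G, QuotientGroup.mk' L x * QuotientGroup.mk' L g =
            QuotientGroup.mk' L g * QuotientGroup.mk' L x →
          ∃ c : G, c * g = g * c ∧ ∃ k ∈ K, QuotientGroup.mk' L x = QuotientGroup.mk' L (c * k))
    (hdouble : SeparableIn {y : G | ∃ c : G, c * g = g * c ∧ ∃ h ∈ H, y = c * h}) :
    SeparableIn {y : G | ∃ h ∈ H, y = h * g * h⁻¹} := by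
  intro z hz
  by_cases hzG : z ∈ {y : G | ∃ x : G, y = x * g * x⁻¹}
  · obtain ⟨x, rfl⟩ := hzG
    have hx : x⁻¹ ∉ {y : G | ∃ c : G, c * g = g * c ∧ ∃ h ∈ H, y = c * h} := by
      rintro ⟨c, hc, h, hh, hxch⟩
      refine hz ⟨h⁻¹, H.inv_mem hh, ?_⟩
      rw [← conj_mul_eq_conj_of_commute (Commute.inv_left hc) h⁻¹, ← mul_inv_rev, ← hxch, inv_inv]
    obtain ⟨K, hK, hKf, hKsep⟩ := hdouble x⁻¹ hx
    obtain ⟨L, hL, hLf, hLK, hCCL⟩ := hCC K hK hKf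
    refine ⟨L, hL, hLf, ?_⟩
    rintro _ ⟨h, hh, rfl⟩ hmem
    obtain ⟨c, hc, hcK⟩ := exists_commute_mul_inv_mem_of_inv_mul_conj_mem hLK hCCL hmem
    exact hKsep (c * h⁻¹) ⟨c, hc, h⁻¹, H.inv_mem hh, rfl⟩ (by rwa [inv_inv])
  · exact hclass.exists_separating_of_subset (by rintro _ ⟨h, -, rfl⟩; exact ⟨h, rfl⟩) hzG
end

section
/- If an element g of a group G has a separable H-conjugacy class g^H in G (for a subgroup H ≤ G), then the double coset C_G(g)·H is separable in G. -/
/-- If the `H`-conjugacy class of `g` is separable in `G`, then the double coset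
`C_G(g) · H` is separable in `G`. -/
theorem doubleCoset_separable_of_conjClass_separable {G : Type*} [Group G]
    (H : Subgroup G) (g : G)
    (hsep : SeparableIn {y : G | ∃ h ∈ H, y = h * g * h⁻¹}) :
    SeparableIn {y : G | ∃ c : G, c * g = g * c ∧ ∃ h ∈ H, y = c * h} := by
  intro x hx
  -- First: x⁻¹ * g * x is not in the H-conjugacy class of g.
  have hxg : x⁻¹ * g * x ∉ {y : G | ∃ h ∈ H, y = h * g * h⁻¹} := by
    rintro ⟨h, hh, heq⟩
    apply hx
    refine ⟨x * h, ?_, h⁻¹, H.inv_mem hh, by group⟩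
    have h2 : g * x = x * h * g * h⁻¹ := by
      have h3 : g * x = x * (h * g * h⁻¹) := by rw [← heq]; group
      rw [h3]; group
    calc x * h * g = g * x * h := by rw [h2]; group
      _ = g * (x * h) := by group
  obtain ⟨N, hNnorm, hNfi, hN⟩ := hsep _ hxg
  refine ⟨N, hNnorm, hNfi, ?_⟩
  rintro y ⟨c, hc, h, hh, rfl⟩ hmem
  -- hmem : x⁻¹ * (c * h) ∈ N, derive contradiction with hN applied to h⁻¹ * g * h
  set n : G := x⁻¹ * (c * h) with hn
  have hs : h⁻¹ * g * h ∈ {y : G | ∃ h ∈ H, y = h * g * h⁻¹} :=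
    ⟨h⁻¹, H.inv_mem hh, by group⟩
  apply hN _ hs
  have hx' : x = c * h * n⁻¹ := by rw [hn]; group
  have key : (x⁻¹ * g * x)⁻¹ * (h⁻¹ * g * h)
      = n * ((h⁻¹ * g * h)⁻¹ * n⁻¹ * (h⁻¹ * g * h)) := by
    rw [hx']
    have hcgh : (c * h)⁻¹ * g * (c * h) = h⁻¹ * g * h := by
      have : (c*h)⁻¹ * g * (c*h) = h⁻¹ * (c⁻¹ * g * c) * h := by group
      rw [this]
      have : c⁻¹ * g * c = g := by
        rw [mul_assoc, ← hc]; group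
      rw [this]
    calc ((c * h * n⁻¹)⁻¹ * g * (c * h * n⁻¹))⁻¹ * (h⁻¹ * g * h)
        = n * ((c * h)⁻¹ * g * (c * h))⁻¹ * n⁻¹ * (h⁻¹ * g * h) := by group
      _ = n * (h⁻¹ * g * h)⁻¹ * n⁻¹ * (h⁻¹ * g * h) := by rw [hcgh]
      _ = n * ((h⁻¹ * g * h)⁻¹ * n⁻¹ * (h⁻¹ * g * h)) := by group
  rw [key]
  exact N.mul_mem hmem (hNnorm.conj_mem' _ (N.inv_mem hmem) _)
end

section
/- Let G be a residually finite group, H ≤ G a subgroup, and g ∈ G. Then the following are equivalent: (1) for every finite index normal subgroup K ⊴ G there exists a finite index normal subgroup L ≤ K such that the centralizer of the image of g in the image of H in G/L is contained in the image of C_H(g)·K; (2) in the profinite completion Ĝ of G, the closure of C_H(g) equals the centralizer of g in the closure of H. -/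
/-- The finite index normal subgroups of `G`. -/
def FinNormal (G : Type*) [Group G] := {N : Subgroup G // N.Normal ∧ N.FiniteIndex}

instance {G : Type*} [Group G] (N : FinNormal G) : N.1.Normal := N.2.1

instance {G : Type*} [Group G] (N : FinNormal G) : TopologicalSpace (G ⧸ N.1) := ⊥

/-- The product of all finite quotients of `G`; the profinite completion of `G`
is the closure of the image of `G` in this compact topological group. -/
def ProfinitePi (G : Type*) [Group G] := ∀ N : FinNormal G, G ⧸ N.1

instance {G : Type*} [Group G] : Group (ProfinitePi G) :=
  inferInstanceAs (Group (∀ N : FinNormal G, G ⧸ N.1))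

instance {G : Type*} [Group G] : TopologicalSpace (ProfinitePi G) :=
  inferInstanceAs (TopologicalSpace (∀ N : FinNormal G, G ⧸ N.1))

/-- The canonical map from `G` to the product of its finite quotients. -/
def toProfinitePi (G : Type*) [Group G] : G →* ProfinitePi G where
  toFun g := fun N => QuotientGroup.mk' N.1 g
  map_one' := by
    funext N
    exact map_one (QuotientGroup.mk' N.1)
  map_mul' a b := by
    funext N
    exact map_mul (QuotientGroup.mk' N.1) a b


/-!
A point of the profinite completion lies in the closure of `S ⊆ G` iff it agrees with an element of
`S` in any finitely many finite quotients. Given the centralizer condition, a point `x` of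
`C_{closure H}(g)` is approximated in `G/K` by first approximating it by some `h ∈ H` in a deeper
quotient `G/L`: there `h` commutes with `g`, so the condition replaces `h` by an element of `C_H(g)`
with the same image in `G/K`. Conversely, if the condition fails at `K`, pick for every `L` some
`a_L ∈ H` commuting with `g` modulo `L` but outside `C_H(g) K`. By compactness the net `(a_L)`,
as `L` shrinks, has a cluster point; it lies in `C_{closure H}(g)`, but its image in `G/K` is
that of some `a_L`, so it is not in the closure of `C_H(g)`.
-/

section

open Filter Topology

variable {G : Type*} [Group G]

namespace FinNormal

instance : SemilatticeInf (FinNormal G) :=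
  Subtype.semilatticeInf fun _ _ ⟨_, _⟩ ⟨_, _⟩ => ⟨inferInstance, inferInstance⟩

instance : OrderTop (FinNormal G) :=
  Subtype.orderTop ⟨inferInstance, inferInstance⟩

instance (N : FinNormal G) : N.1.FiniteIndex := N.2.2

instance (N : FinNormal G) : DiscreteTopology (G ⧸ N.1) := ⟨rfl⟩

end FinNormal

namespace ProfinitePi

instance : CompactSpace (ProfinitePi G) :=
  inferInstanceAs (CompactSpace (∀ N : FinNormal G, G ⧸ N.1))

instance : T2Space (ProfinitePi G) :=
  inferInstanceAs (T2Space (∀ N : FinNormal G, G ⧸ N.1))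

instance : IsTopologicalGroup (ProfinitePi G) :=
  inferInstanceAs (IsTopologicalGroup (∀ N : FinNormal G, G ⧸ N.1))

theorem continuous_apply (N : FinNormal G) : Continuous fun x : ProfinitePi G => x N :=
  _root_.continuous_apply N

theorem hasBasis_nhds (x : ProfinitePi G) :
    (𝓝 x).HasBasis Set.Finite fun I => {y : ProfinitePi G | ∀ N ∈ I, y N = x N} := by
  have : 𝓝 x = Filter.pi fun N : FinNormal G => pure (x N) := by
    simp only [← nhds_discrete]
    exact nhds_pi
  rw [this]
  exact Filter.hasBasis_pi_pure x

end ProfinitePi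

theorem mem_closure_image_toProfinitePi_iff {S : Set G} {x : ProfinitePi G} :
    x ∈ closure (toProfinitePi G '' S) ↔
      ∀ I : Set (FinNormal G), I.Finite → ∃ s ∈ S, ∀ N ∈ I, (s : G ⧸ N.1) = x N := by
  rw [mem_closure_iff_nhds_basis (ProfinitePi.hasBasis_nhds x)]
  simp only [Set.exists_mem_image]
  rfl

theorem QuotientGroup.mk_eq_mk_of_le {L N : Subgroup G} (hLN : L ≤ N) {a b : G}
    (h : (a : G ⧸ L) = b) : (a : G ⧸ N) = b :=
  QuotientGroup.eq.2 (hLN (QuotientGroup.eq.1 h))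

variable (H : Subgroup G) (g : G)

def CentralizerCondition : Prop :=
  ∀ K : Subgroup G, K.Normal → K.FiniteIndex →
    ∃ (L : Subgroup G) (_ : L.Normal), L.FiniteIndex ∧ L ≤ K ∧
      ∀ x ∈ H, QuotientGroup.mk' L x * QuotientGroup.mk' L g =
          QuotientGroup.mk' L g * QuotientGroup.mk' L x →
        ∃ c ∈ H, c * g = g * c ∧
          ∃ k ∈ K, QuotientGroup.mk' L x = QuotientGroup.mk' L (c * k)

theorem closure_image_centralizer_subset :
    closure (toProfinitePi G '' {h | h ∈ H ∧ h * g = g * h}) ⊆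
      {x ∈ closure (toProfinitePi G '' H) | x * toProfinitePi G g = toProfinitePi G g * x} := by
  refine closure_minimal ?_
    (isClosed_closure.inter (isClosed_eq (continuous_mul_const _) (continuous_const_mul _)))
  rintro _ ⟨h, hh, rfl⟩
  exact ⟨subset_closure ⟨h, hh.1, rfl⟩, by rw [← map_mul, ← map_mul, hh.2]⟩

variable {H g}

theorem subset_closure_image_centralizer (hCC : CentralizerCondition H g) :
    {x ∈ closure (toProfinitePi G '' H) | x * toProfinitePi G g = toProfinitePi G g * x} ⊆
      closure (toProfinitePi G '' {h | h ∈ H ∧ h * g = g * h}) := by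
  rintro x ⟨hxH, hx_comm⟩
  rw [mem_closure_image_toProfinitePi_iff] at hxH ⊢
  intro I hI
  obtain ⟨K, hK⟩ := hI.bddBelow
  obtain ⟨L, hLn, hLfi, hLK, hL⟩ := hCC K.1 K.2.1 K.2.2
  let L' : FinNormal G := ⟨L, hLn, hLfi⟩
  obtain ⟨h, hhH, hhx⟩ := hxH (insert L' I) (hI.insert L')
  have hh_comm : QuotientGroup.mk' L h * QuotientGroup.mk' L g =
      QuotientGroup.mk' L g * QuotientGroup.mk' L h := by
    rw [QuotientGroup.mk'_apply, hhx L' (Set.mem_insert L' I)]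
    exact congrFun hx_comm L'
  obtain ⟨c, hcH, hcg, k, hkK, hhc⟩ := hL h hhH hh_comm
  refine ⟨c, ⟨hcH, hcg⟩, fun N hN => ?_⟩
  calc (c : G ⧸ N.1) = (c * k : G) := (QuotientGroup.mk_mul_of_mem c (hK hN hkK)).symm
    _ = h := (QuotientGroup.mk_eq_mk_of_le (hLK.trans (hK hN)) hhc).symm
    _ = x N := hhx N (Set.mem_insert_of_mem L' hN)

theorem exists_witnesses_of_not_centralizerCondition (hCC : ¬ CentralizerCondition H g) :
    ∃ (K : FinNormal G) (a : FinNormal G → G), (∀ L, a L ∈ H) ∧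
      (∀ L : FinNormal G, ((a L * g : G) : G ⧸ L.1) = (g * a L : G)) ∧
      ∀ L, ∀ c ∈ H, c * g = g * c → (a L : G ⧸ K.1) ≠ c := by
  simp only [CentralizerCondition, not_forall, not_exists, not_and] at hCC
  obtain ⟨K, hKn, hKfi, hK⟩ := hCC
  let K' : FinNormal G := ⟨K, hKn, hKfi⟩
  have : ∀ L : FinNormal G, ∃ a ∈ H, ((a * g : G) : G ⧸ L.1) = (g * a : G) ∧
      ∀ c ∈ H, c * g = g * c → (a : G ⧸ K) ≠ c := by
    intro L
    obtain ⟨a, haH, ha_comm, ha_ne⟩ := hK (L ⊓ K').1 inferInstance inferInstance inf_le_right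
    rw [← map_mul, ← map_mul] at ha_comm
    refine ⟨a, haH, QuotientGroup.mk_eq_mk_of_le inf_le_left ha_comm,
      fun c hcH hcg hac => ha_ne c hcH hcg (c⁻¹ * a) (QuotientGroup.eq.1 hac.symm) ?_⟩
    rw [mul_inv_cancel_left]
  choose a haH ha_comm ha_ne using this
  exact ⟨K', a, haH, ha_comm, ha_ne⟩

theorem centralizerCondition_of_subset_closure_image_centralizer
    (h : {x ∈ closure (toProfinitePi G '' H) | x * toProfinitePi G g = toProfinitePi G g * x} ⊆
      closure (toProfinitePi G '' {h | h ∈ H ∧ h * g = g * h})) :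
    CentralizerCondition H g := by
  by_contra hCC
  obtain ⟨K, a, haH, ha_comm, ha_ne⟩ := exists_witnesses_of_not_centralizerCondition hCC
  obtain ⟨x, hx⟩ : ∃ x, MapClusterPt x atBot (toProfinitePi G ∘ a) :=
    exists_clusterPt_of_compactSpace _
  have hxH : x ∈ closure (toProfinitePi G '' H) :=
    ClusterPt.mem_closure_of_mem hx _ (mem_map.2 (univ_mem' fun L => ⟨a L, haH L, rfl⟩))
  have hx_comm : x * toProfinitePi G g = toProfinitePi G g * x := by
    funext N
    have hN : IsClosed {y : ProfinitePi G | y N * g = g * y N} :=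
      (isClosed_discrete {v : G ⧸ N.1 | v * g = g * v}).preimage (ProfinitePi.continuous_apply N)
    refine hN.closure_subset (ClusterPt.mem_closure_of_mem hx _ (mem_map.2 ?_))
    filter_upwards [eventually_le_atBot N] with L hL
    exact QuotientGroup.mk_eq_mk_of_le hL (ha_comm L)
  obtain ⟨c, ⟨hcH, hcg⟩, hcx⟩ := mem_closure_image_toProfinitePi_iff.1 (h ⟨hxH, hx_comm⟩) {K}
    (Set.finite_singleton K)
  have hxK : ∀ᶠ y in 𝓝 x, y K = x K :=
    (ProfinitePi.continuous_apply K).continuousAt ((isOpen_discrete {x K}).mem_nhds rfl)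
  obtain ⟨L, hL⟩ := (hx.frequently hxK).exists
  exact ha_ne L c hcH hcg (hL.trans (hcx K rfl).symm)

end

theorem centralizer_condition_iff_profinite_general {G : Type*} [Group G]
    (H : Subgroup G) (g : G) :
    (∀ K : Subgroup G, K.Normal → K.FiniteIndex →
      ∃ (L : Subgroup G) (_ : L.Normal), L.FiniteIndex ∧ L ≤ K ∧
        ∀ x ∈ H, QuotientGroup.mk' L x * QuotientGroup.mk' L g =
            QuotientGroup.mk' L g * QuotientGroup.mk' L x →
          ∃ c ∈ H, c * g = g * c ∧
            ∃ k ∈ K, QuotientGroup.mk' L x = QuotientGroup.mk' L (c * k)) ↔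
    closure (toProfinitePi G '' {h : G | h ∈ H ∧ h * g = g * h}) =
      {x ∈ closure (toProfinitePi G '' (H : Set G)) |
        x * toProfinitePi G g = toProfinitePi G g * x} :=
  ⟨fun hCC => (closure_image_centralizer_subset H g).antisymm
      (subset_closure_image_centralizer hCC),
    fun h => centralizerCondition_of_subset_closure_image_centralizer h.ge⟩

/-- For a residually finite group `G`, a subgroup `H` and `g ∈ G`, the
Centralizer Condition for the pair `(H, g)` is equivalent to the equality
`closure (C_H(g)) = C_{closure H}(g)` in the profinite completion of `G`
(realized as the closure of the image of `G` in the product of its finite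
quotients). -/
theorem centralizer_condition_iff_profinite {G : Type*} [Group G]
    (hRF : ResiduallyFinite G) (H : Subgroup G) (g : G) :
    (∀ K : Subgroup G, K.Normal → K.FiniteIndex →
      ∃ (L : Subgroup G) (_ : L.Normal), L.FiniteIndex ∧ L ≤ K ∧
        ∀ x ∈ H, QuotientGroup.mk' L x * QuotientGroup.mk' L g =
            QuotientGroup.mk' L g * QuotientGroup.mk' L x →
          ∃ c ∈ H, c * g = g * c ∧
            ∃ k ∈ K, QuotientGroup.mk' L x = QuotientGroup.mk' L (c * k)) ↔
    closure (toProfinitePi G '' {h : G | h ∈ H ∧ h * g = g * h}) =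
      {x ∈ closure (toProfinitePi G '' (H : Set G)) |
        x * toProfinitePi G g = toProfinitePi G g * x} :=
  centralizer_condition_iff_profinite_general H g
end
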